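/- arXiv:1710.06026 — 2 statements merged into one kernel-verified Lean document; each statement's English description precedes it below -/
import Mathlib

section
/- Consider maximizing Σ_l α_l x_l² over x ∈ ℝⁿ subject to Σ_l (x_l − c_l)² ≤ C, where C > 0, all α_l > 0, and all c_l ≠ 0. At any maximizer x*, for every l the relative change r_l := (x*_l − c_l)/c_l is nonnegative. (Equivalently, x*_l has the same sign as c_l and |x*_l| ≥ |c_l|.) -/
/-!
Reflecting the single coordinate `x l` through `c l` keeps `∑ (x j - c j) ^ 2` unchanged and
raises the objective by `4 α l c l (c l - x l)`, which is positive whenever `(x l - c l) / c l < 0`.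
-/

open Finset

section Reflection

variable {ι : Type*} [Fintype ι] [DecidableEq ι]

theorem sum_apply_update_eq (f : ι → ℝ → ℝ) (x : ι → ℝ) (l : ι) (v : ℝ) :
    ∑ j, f j (Function.update x l v j) = ∑ j, f j (x j) + (f l v - f l (x l)) := by
  simp only [Function.apply_update f x l v]
  rw [sum_update_of_mem (mem_univ l),
    sum_eq_add_sum_sdiff_singleton_of_mem (mem_univ l) fun j => f j (x j)]
  ring

abbrev reflectAt (x c : ι → ℝ) (l : ι) : ι → ℝ :=
  Function.update x l (2 * c l - x l)

theorem sum_sub_sq_reflectAt (x c : ι → ℝ) (l : ι) :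
    ∑ j, (reflectAt x c l j - c j) ^ 2 = ∑ j, (x j - c j) ^ 2 := by
  rw [sum_apply_update_eq (fun j t => (t - c j) ^ 2)]
  ring

theorem sum_mul_sq_reflectAt (α x c : ι → ℝ) (l : ι) :
    ∑ j, α j * reflectAt x c l j ^ 2 =
      ∑ j, α j * x j ^ 2 + 4 * α l * (c l * (c l - x l)) := by
  rw [sum_apply_update_eq (fun j t => α j * t ^ 2)]
  ring

theorem mul_sub_nonneg_of_isMax {α c x : ι → ℝ} {C : ℝ} (l : ι) (hα : 0 < α l)
    (hmem : ∑ j, (x j - c j) ^ 2 ≤ C)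
    (hmax : ∀ y : ι → ℝ, ∑ j, (y j - c j) ^ 2 ≤ C →
      ∑ j, α j * y j ^ 2 ≤ ∑ j, α j * x j ^ 2) :
    0 ≤ c l * (x l - c l) := by
  have hle := hmax (reflectAt x c l) ((sum_sub_sq_reflectAt x c l).trans_le hmem)
  rw [sum_mul_sq_reflectAt] at hle
  nlinarith

end Reflection

theorem stmt_6_general {n : ℕ} (α c : Fin n → ℝ) (C : ℝ)
    (hα : ∀ l, 0 < α l) (x : Fin n → ℝ)
    (hmem : ∑ l, (x l - c l) ^ 2 ≤ C)
    (hmax : ∀ y : Fin n → ℝ, ∑ l, (y l - c l) ^ 2 ≤ C →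
      ∑ l, α l * (y l) ^ 2 ≤ ∑ l, α l * (x l) ^ 2) :
    ∀ l, 0 ≤ (x l - c l) / c l := by
  intro l
  have h := mul_sub_nonneg_of_isMax l (hα l) hmem hmax
  exact div_nonneg_iff.mpr (mul_nonneg_iff.mp (by rwa [mul_comm] at h))

/-- At any maximizer of `∑ l, α l * x l ^ 2` subject to `∑ l, (x l - c l)^2 ≤ C`
(with `C > 0`, `α l > 0`, `c l ≠ 0`), each relative change `(x l - c l) / c l` is
nonnegative. -/
theorem stmt_6 {n : ℕ} (α c : Fin n → ℝ) (C : ℝ) (hC : 0 < C)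
    (hα : ∀ l, 0 < α l) (hc : ∀ l, c l ≠ 0) (x : Fin n → ℝ)
    (hmem : ∑ l, (x l - c l) ^ 2 ≤ C)
    (hmax : ∀ y : Fin n → ℝ, ∑ l, (y l - c l) ^ 2 ≤ C →
      ∑ l, α l * (y l) ^ 2 ≤ ∑ l, α l * (x l) ^ 2) :
    ∀ l, 0 ≤ (x l - c l) / c l :=
  stmt_6_general α c C hα x hmem hmax
end

section
/- Consider maximizing Σ_l α_l x_l² over x ∈ ℝⁿ subject to Σ_l (x_l − c_l)² ≤ C, where C > 0, all α_l > 0, and all c_l ≠ 0. At any maximizer x*, the relative changes r_l = (x*_l − c_l)/c_l are monotone in α: if α_j ≥ α_k then r_j ≥ r_k. -/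
open Finset

/-!
Write `s = x - c` for the deviation of a maximizer. Reflecting one coordinate of `s`,
or rotating two of them, keeps `x` feasible. Reflecting `s_l` changes the objective by
`-4 α_l c_l s_l`, so `c_l s_l ≥ 0`, i.e. `r_l ≥ 0`. Rotating `(s_j, s_k)` by an angle `t`
gives a function of `t` maximal at `t = 0`; its vanishing derivative is the stationarity
relation `α_j x_j s_k = α_k x_k s_j`, that is `α_j (1 + r_j) r_k = α_k (1 + r_k) r_j`.
Together with `r ≥ 0` this forces `r_k ≤ r_j` whenever `α_k ≤ α_j`.
-/

section

variable {ι : Type*} [Fintype ι]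

theorem sum_sub_sum_eq_sum_of_eq_off (F : ι → ℝ → ℝ) {x y : ι → ℝ} (s : Finset ι)
    (hy : ∀ i ∉ s, y i = x i) :
    ∑ i, F i (y i) - ∑ i, F i (x i) = ∑ i ∈ s, (F i (y i) - F i (x i)) := by
  rw [← sum_sub_distrib]
  exact (sum_subset (subset_univ s) fun i _ hi => by simp [hy i hi]).symm

theorem sum_mul_sq_le_of_deviation_le {α c x y : ι → ℝ} {C : ℝ}
    (hmem : ∑ l, (x l - c l) ^ 2 ≤ C)
    (hmax : ∀ z : ι → ℝ, ∑ l, (z l - c l) ^ 2 ≤ C →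
      ∑ l, α l * z l ^ 2 ≤ ∑ l, α l * x l ^ 2)
    (s : Finset ι) (hy : ∀ i ∉ s, y i = x i)
    (hdev : ∑ i ∈ s, (y i - c i) ^ 2 ≤ ∑ i ∈ s, (x i - c i) ^ 2) :
    ∑ i ∈ s, α i * y i ^ 2 ≤ ∑ i ∈ s, α i * x i ^ 2 := by
  have hfeas := sum_sub_sum_eq_sum_of_eq_off (fun i t => (t - c i) ^ 2) s hy
  have hobj := sum_sub_sum_eq_sum_of_eq_off (fun i t => α i * t ^ 2) s hy
  simp only [sum_sub_distrib] at hfeas hobj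
  linarith [hmax y (by linarith)]

variable [DecidableEq ι]

theorem mul_sub_nonneg_of_max {α c x : ι → ℝ} {C : ℝ}
    (hmem : ∑ l, (x l - c l) ^ 2 ≤ C)
    (hmax : ∀ y : ι → ℝ, ∑ l, (y l - c l) ^ 2 ≤ C →
      ∑ l, α l * y l ^ 2 ≤ ∑ l, α l * x l ^ 2) {l : ι} (hαl : 0 < α l) :
    0 ≤ c l * (x l - c l) := by
  have h := sum_mul_sq_le_of_deviation_le hmem hmax {l}
    (y := Function.update x l (2 * c l - x l))
    (fun i hi => Function.update_of_ne (by simpa using hi) _ _)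
    (by simp only [sum_singleton, Function.update_self]; nlinarith)
  simp only [sum_singleton, Function.update_self] at h
  nlinarith

theorem mul_mul_sub_eq_of_max {α c x : ι → ℝ} {C : ℝ}
    (hmem : ∑ l, (x l - c l) ^ 2 ≤ C)
    (hmax : ∀ y : ι → ℝ, ∑ l, (y l - c l) ^ 2 ≤ C →
      ∑ l, α l * y l ^ 2 ≤ ∑ l, α l * x l ^ 2) {j k : ι} (hjk : j ≠ k) :
    α j * x j * (x k - c k) = α k * x k * (x j - c j) := by
  set sj := x j - c j with hsj
  set sk := x k - c k with hsk
  let u t := c j + sj * Real.cos t - sk * Real.sin t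
  let v t := c k + sj * Real.sin t + sk * Real.cos t
  let g t := α j * u t ^ 2 + α k * v t ^ 2
  have hmaxg : IsLocalMax g 0 := Filter.Eventually.of_forall fun t => by
    have h := sum_mul_sq_le_of_deviation_le hmem hmax {j, k}
      (y := Function.update (Function.update x j (u t)) k (v t))
      (fun i hi => by
        simp only [mem_insert, mem_singleton, not_or] at hi
        simp [Function.update_of_ne hi.1, Function.update_of_ne hi.2])
      (by
        simp only [sum_pair hjk, Function.update_self, Function.update_of_ne hjk]
        linear_combination (sj ^ 2 + sk ^ 2) * Real.sin_sq_add_cos_sq t)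
    simp only [sum_pair hjk, Function.update_self, Function.update_of_ne hjk] at h
    simpa [g, u, v, sj, sk] using h
  have hu : HasDerivAt u (-sk) 0 :=
    ((((Real.hasDerivAt_cos 0).const_mul sj).const_add (c j)).sub
      ((Real.hasDerivAt_sin 0).const_mul sk)).congr_deriv (by simp)
  have hv : HasDerivAt v sj 0 :=
    ((((Real.hasDerivAt_sin 0).const_mul sj).const_add (c k)).add
      ((Real.hasDerivAt_cos 0).const_mul sk)).congr_deriv (by simp)
  have hg := ((hu.pow 2).const_mul (α j)).add ((hv.pow 2).const_mul (α k))
  have hzero := hmaxg.hasDerivAt_eq_zero hg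
  simp only [u, v, Real.cos_zero, Real.sin_zero] at hzero
  rw [hsj, hsk] at hzero
  norm_num at hzero
  linear_combination -hzero / 2

end

theorem le_of_mul_one_add_mul_eq {a b r s : ℝ} (hb : 0 < b) (hab : a ≤ b) (hr : 0 ≤ r)
    (hs : 0 ≤ s) (h : b * (1 + r) * s = a * (1 + s) * r) : s ≤ r := by
  have hsr : b * (s - r) ≤ 0 := by
    nlinarith [mul_nonneg (sub_nonneg.2 hab) (mul_nonneg (by linarith : (0:ℝ) ≤ 1 + s) hr)]
  nlinarith

theorem stmt_7_general {n : ℕ} (α c : Fin n → ℝ) (C : ℝ)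
    (hα : ∀ l, 0 < α l) (hc : ∀ l, c l ≠ 0) (x : Fin n → ℝ)
    (hmem : ∑ l, (x l - c l) ^ 2 ≤ C)
    (hmax : ∀ y : Fin n → ℝ, ∑ l, (y l - c l) ^ 2 ≤ C →
      ∑ l, α l * (y l) ^ 2 ≤ ∑ l, α l * (x l) ^ 2) :
    ∀ j k, α k ≤ α j → (x k - c k) / c k ≤ (x j - c j) / c j := by
  intro j k hαjk
  obtain rfl | hjk := eq_or_ne j k
  · exact le_rfl
  set r := fun l => (x l - c l) / c l
  have hdev l : x l - c l = c l * r l := (mul_div_cancel₀ _ (hc l)).symm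
  have hr l : 0 ≤ r l := by
    have h := mul_sub_nonneg_of_max hmem hmax (hα l)
    rw [hdev] at h
    nlinarith [sq_pos_of_ne_zero (hc l)]
  have hstat := mul_mul_sub_eq_of_max hmem hmax hjk
  rw [hdev, hdev, show x j = c j * (1 + r j) by linarith [hdev j],
    show x k = c k * (1 + r k) by linarith [hdev k]] at hstat
  refine le_of_mul_one_add_mul_eq (hα j) hαjk (hr j) (hr k)
    (mul_left_cancel₀ (mul_ne_zero (hc j) (hc k)) ?_)
  linear_combination hstat

/-- At any maximizer of `∑ l, α l * x l ^ 2` subject to `∑ l, (x l - c l)^2 ≤ C`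
(with `C > 0`, `α l > 0`, `c l ≠ 0`), the relative changes `(x l - c l) / c l`
are monotone in `α`. -/
theorem stmt_7 {n : ℕ} (α c : Fin n → ℝ) (C : ℝ) (hC : 0 < C)
    (hα : ∀ l, 0 < α l) (hc : ∀ l, c l ≠ 0) (x : Fin n → ℝ)
    (hmem : ∑ l, (x l - c l) ^ 2 ≤ C)
    (hmax : ∀ y : Fin n → ℝ, ∑ l, (y l - c l) ^ 2 ≤ C →
      ∑ l, α l * (y l) ^ 2 ≤ ∑ l, α l * (x l) ^ 2) :
    ∀ j k, α k ≤ α j → (x k - c k) / c k ≤ (x j - c j) / c j :=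
  stmt_7_general α c C hα hc x hmem hmax
end
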